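/- arXiv:2308.08519 — 3 statements merged into one kernel-verified Lean document; each statement's English description precedes it below -/
import Mathlib

section
/- Let T be a triangulated category satisfying the octahedral axiom, with shift functor Σ, and let P be a class of objects of T closed under isomorphisms and finite direct sums, containing 0, and connective, i.e. Hom_T(X, Σ^n Y) = 0 for all X, Y ∈ P and all n ≥ 1. For n ≥ 0 set V_n := P ∗ ΣP ∗ ⋯ ∗ Σ^n P (n+1 factors). Then each class V_n is closed under extensions: for every distinguished triangle X → Y → Z → ΣX with X ∈ V_n and Z ∈ V_n, also Y ∈ V_n. -/
/-!
A distinguished triangle whose third morphism vanishes splits. By connectivity this happens for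
triangles with outer terms in `Σᵏ P`, so each `Σᵏ P` is closed under extensions, and for triangles
`Σⁿ⁺¹P → Y → Vₙ → Σⁿ⁺²P`, since `Hom(Vₙ, Σᵐ P) = 0` for `m > n`; hence `Σⁿ⁺¹P ∗ Vₙ ⊆ Vₙ ∗ Σⁿ⁺¹P`.
With `A = Vₙ` and `B = Σⁿ⁺¹P`, associativity of `∗` and induction on `n` then give
`(A ∗ B) ∗ (A ∗ B) = A ∗ (B ∗ A) ∗ B ⊆ A ∗ (A ∗ B) ∗ B = (A ∗ A) ∗ (B ∗ B) ⊆ A ∗ B`.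
-/

open CategoryTheory Limits Pretriangulated

universe v u

namespace AuslanderIyamaStmt0

section

variable {C : Type u} [Category.{v} C] [HasZeroObject C] [HasShift C ℤ] [Preadditive C]
  [∀ n : ℤ, (shiftFunctor C n).Additive] [Pretriangulated C] [HasBinaryBiproducts C]

/-- `S₁ ∗ S₂`: objects `Y` fitting in a distinguished triangle `X ⟶ Y ⟶ Z ⟶ X⟦1⟧`
with `X ∈ S₁` and `Z ∈ S₂`. -/
def star (S₁ S₂ : Set C) : Set C :=
  {Y | ∃ (X Z : C) (f : X ⟶ Y) (g : Y ⟶ Z) (h : Z ⟶ X⟦(1 : ℤ)⟧),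
    (Triangle.mk f g h ∈ distTriang C) ∧ X ∈ S₁ ∧ Z ∈ S₂}

/-- `Σⁿ S`, closed under isomorphism. -/
def shiftSet (n : ℤ) (S : Set C) : Set C :=
  {X | ∃ Y ∈ S, Nonempty (X ≅ Y⟦n⟧)}

/-- `V n = P ∗ ΣP ∗ ⋯ ∗ Σⁿ P` (associated to the left; by the octahedral axiom `∗` is
associative so the grouping is irrelevant). -/
def V (P : Set C) : ℕ → Set C
  | 0 => P
  | n + 1 => star (V P n) (shiftSet ((n : ℤ) + 1) P)

end

section Shift

variable {C : Type u} [Category.{v} C] [HasShift C ℤ]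

lemma mem_shiftSet_of_iso {S : Set C} {k : ℤ} {X Y : C} (e : X ≅ Y) (hX : X ∈ shiftSet k S) :
    Y ∈ shiftSet k S :=
  let ⟨Q, hQ, ⟨e'⟩⟩ := hX
  ⟨Q, hQ, ⟨e.symm ≪≫ e'⟩⟩

variable [Preadditive C]

def Connective (P : Set C) : Prop :=
  ∀ ⦃X Y : C⦄, X ∈ P → Y ∈ P → ∀ n : ℤ, 1 ≤ n → ∀ f : X ⟶ Y⟦n⟧, f = 0

lemma Connective.shift_hom_eq_zero {P : Set C} (hP : Connective P) {Q W : C} (hQ : Q ∈ P)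
    (hW : W ∈ P) {k m : ℤ} (hkm : k < m) (f : Q⟦k⟧ ⟶ W⟦m⟧) : f = 0 := by
  let e := (shiftFunctorAdd' C (m - k) k m (by omega)).app W
  have h : (shiftFunctor C k).preimage (f ≫ e.hom) = 0 := hP hQ hW (m - k) (by omega) _
  rw [← cancel_mono e.hom, zero_comp, ← (shiftFunctor C k).map_preimage (f ≫ e.hom), h,
    Functor.map_zero]

lemma Connective.shiftSet_hom_eq_zero {P : Set C} (hP : Connective P) {k m : ℤ} {X W : C}
    (hX : X ∈ shiftSet k P) (hW : W ∈ P) (hkm : k < m) (f : X ⟶ W⟦m⟧) : f = 0 := by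
  obtain ⟨Q, hQ, ⟨e⟩⟩ := hX
  rw [← cancel_epi e.inv, comp_zero]
  exact hP.shift_hom_eq_zero hQ hW hkm _

lemma hom_shift_one_eq_zero_of_mem_shiftSet {S : Set C} {j : ℤ} {X A : C} (hA : A ∈ shiftSet j S)
    (h : ∀ W ∈ S, ∀ f : X ⟶ W⟦j + 1⟧, f = 0) (u : X ⟶ A⟦(1 : ℤ)⟧) : u = 0 := by
  obtain ⟨Q, hQ, ⟨e⟩⟩ := hA
  let e' : A⟦(1 : ℤ)⟧ ≅ Q⟦j + 1⟧ :=
    (shiftFunctor C (1 : ℤ)).mapIso e ≪≫ ((shiftFunctorAdd' C j 1 (j + 1) rfl).app Q).symm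
  rw [← cancel_mono e'.hom, zero_comp]
  exact h Q hQ _

variable [∀ n : ℤ, (shiftFunctor C n).Additive] [HasBinaryBiproducts C]

lemma biprod_mem_shiftSet {S : Set C} (hsum : ∀ ⦃X Y : C⦄, X ∈ S → Y ∈ S → (X ⊞ Y) ∈ S)
    {k : ℤ} {X Y : C} (hX : X ∈ shiftSet k S) (hY : Y ∈ shiftSet k S) :
    (X ⊞ Y) ∈ shiftSet k S := by
  obtain ⟨Q₁, hQ₁, ⟨e₁⟩⟩ := hX
  obtain ⟨Q₂, hQ₂, ⟨e₂⟩⟩ := hY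
  have := preservesBinaryBiproducts_of_preservesBiproducts (shiftFunctor C k)
  exact ⟨Q₁ ⊞ Q₂, hsum hQ₁ hQ₂,
    ⟨biprod.mapIso e₁ e₂ ≪≫ ((shiftFunctor C k).mapBiprod Q₁ Q₂).symm⟩⟩

end Shift

variable {C : Type u} [Category.{v} C] [HasZeroObject C] [HasShift C ℤ] [Preadditive C]
  [∀ n : ℤ, (shiftFunctor C n).Additive] [Pretriangulated C]

lemma mem_star {S₁ S₂ : Set C} {T : Triangle C} (hT : T ∈ distTriang C)
    (h₁ : T.obj₁ ∈ S₁) (h₃ : T.obj₃ ∈ S₂) : T.obj₂ ∈ star S₁ S₂ :=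
  ⟨T.obj₁, T.obj₃, T.mor₁, T.mor₂, T.mor₃, hT, h₁, h₃⟩

lemma star_mono {S₁ S₁' S₂ S₂' : Set C} (h₁ : S₁ ⊆ S₁') (h₂ : S₂ ⊆ S₂') :
    star S₁ S₂ ⊆ star S₁' S₂' :=
  fun _ ⟨X, Z, f, g, h, hT, hX, hZ⟩ => ⟨X, Z, f, g, h, hT, h₁ hX, h₂ hZ⟩

lemma mem_star_of_iso {S₁ S₂ : Set C} {Y Y' : C} (e : Y ≅ Y') (hY : Y ∈ star S₁ S₂) :
    Y' ∈ star S₁ S₂ :=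
  (ObjectProperty.extensionProduct (· ∈ S₁) (· ∈ S₂)).prop_of_iso e hY

lemma star_assoc [IsTriangulated C] (S₁ S₂ S₃ : Set C) :
    star (star S₁ S₂) S₃ = star S₁ (star S₂ S₃) :=
  congrArg Set.ofPred (ObjectProperty.extensionProduct_assoc (· ∈ S₁) (· ∈ S₂) (· ∈ S₃))

lemma star_star_subset_of_swap [IsTriangulated C] {A B : Set C} (hA : star A A ⊆ A)
    (hB : star B B ⊆ B) (hBA : star B A ⊆ star A B) : star (star A B) (star A B) ⊆ star A B :=
  calc star (star A B) (star A B) = star A (star (star B A) B) := by simp only [star_assoc]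
    _ ⊆ star A (star (star A B) B) := star_mono subset_rfl (star_mono hBA subset_rfl)
    _ = star (star A A) (star B B) := by simp only [star_assoc]
    _ ⊆ star A B := star_mono hA hB

lemma hom_eq_zero_of_mem_star {S₁ S₂ : Set C} {Y W : C}
    (h₁ : ∀ X ∈ S₁, ∀ f : X ⟶ W, f = 0) (h₂ : ∀ Z ∈ S₂, ∀ f : Z ⟶ W, f = 0)
    (hY : Y ∈ star S₁ S₂) (f : Y ⟶ W) : f = 0 := by
  obtain ⟨X, Z, a, b, c, hT, hX, hZ⟩ := hY
  obtain ⟨g, rfl⟩ := Triangle.yoneda_exact₂ _ hT f (h₁ X hX _)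
  exact (congrArg (b ≫ ·) (h₂ Z hZ g)).trans comp_zero

lemma Connective.V_hom_eq_zero {P : Set C} (hP : Connective P) (n : ℕ) {m : ℤ} {X W : C}
    (hX : X ∈ V P n) (hW : W ∈ P) (hm : n < m) (f : X ⟶ W⟦m⟧) : f = 0 := by
  induction n generalizing X with
  | zero => exact hP hX hW m (by omega) f
  | succ n ih =>
    exact hom_eq_zero_of_mem_star (fun X hX => ih hX (by omega))
      (fun Z hZ => hP.shiftSet_hom_eq_zero hZ hW (by omega)) hX f

variable [HasBinaryBiproducts C]

lemma exists_iso_biprod_of_mem_star {S₁ S₂ : Set C}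
    (hS : ∀ A ∈ S₁, ∀ B ∈ S₂, ∀ u : B ⟶ A⟦(1 : ℤ)⟧, u = 0) {Y : C} (hY : Y ∈ star S₁ S₂) :
    ∃ A ∈ S₁, ∃ B ∈ S₂, Nonempty (Y ≅ A ⊞ B) := by
  obtain ⟨A, B, f, g, h, hT, hA, hB⟩ := hY
  obtain ⟨e, -⟩ := exists_iso_binaryBiproduct_of_distTriang _ hT (hS A hA B hB h)
  exact ⟨A, hA, B, hB, ⟨e⟩⟩

lemma star_self_subset_of_split {S : Set C} (hiso : ∀ ⦃X Y : C⦄, (X ≅ Y) → X ∈ S → Y ∈ S)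
    (hsum : ∀ ⦃X Y : C⦄, X ∈ S → Y ∈ S → (X ⊞ Y) ∈ S)
    (hS : ∀ A ∈ S, ∀ B ∈ S, ∀ u : B ⟶ A⟦(1 : ℤ)⟧, u = 0) : star S S ⊆ S := by
  intro Y hY
  obtain ⟨A, hA, B, hB, ⟨e⟩⟩ := exists_iso_biprod_of_mem_star hS hY
  exact hiso e.symm (hsum hA hB)

lemma star_subset_star_swap {S₁ S₂ : Set C}
    (hS : ∀ A ∈ S₁, ∀ B ∈ S₂, ∀ u : B ⟶ A⟦(1 : ℤ)⟧, u = 0) : star S₁ S₂ ⊆ star S₂ S₁ := by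
  intro Y hY
  obtain ⟨A, hA, B, hB, ⟨e⟩⟩ := exists_iso_biprod_of_mem_star hS hY
  exact mem_star_of_iso (biprod.braiding B A ≪≫ e.symm)
    (mem_star (binaryBiproductTriangle_distinguished B A) hB hA)

lemma star_V_subset [IsTriangulated C] {P : Set C}
    (hPiso : ∀ ⦃X Y : C⦄, (X ≅ Y) → X ∈ P → Y ∈ P)
    (hPsum : ∀ ⦃X Y : C⦄, X ∈ P → Y ∈ P → (X ⊞ Y) ∈ P) (hP : Connective P) (n : ℕ) :
    star (V P n) (V P n) ⊆ V P n := by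
  induction n with
  | zero => exact star_self_subset_of_split hPiso hPsum fun A hA B hB => hP hB hA 1 le_rfl
  | succ n ih =>
    have hshift : star (shiftSet (n + 1) P) (shiftSet (n + 1) P) ⊆ shiftSet (n + 1) P :=
      star_self_subset_of_split (fun _ _ => mem_shiftSet_of_iso)
        (fun _ _ => biprod_mem_shiftSet hPsum) fun A hA B hB =>
          hom_shift_one_eq_zero_of_mem_shiftSet hA fun W hW =>
            hP.shiftSet_hom_eq_zero hB hW (by omega)
    have hswap : star (shiftSet (n + 1) P) (V P n) ⊆ star (V P n) (shiftSet (n + 1) P) :=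
      star_subset_star_swap fun A hA B hB =>
        hom_shift_one_eq_zero_of_mem_shiftSet hA fun W hW => hP.V_hom_eq_zero n hB hW (by omega)
    exact star_star_subset_of_swap ih hshift hswap

theorem statement0_general [IsTriangulated C] (P : Set C)
    (hPiso : ∀ ⦃X Y : C⦄, (X ≅ Y) → X ∈ P → Y ∈ P)
    (hPsum : ∀ ⦃X Y : C⦄, X ∈ P → Y ∈ P → (X ⊞ Y) ∈ P)
    (hPconn : ∀ ⦃X Y : C⦄, X ∈ P → Y ∈ P → ∀ n : ℤ, 1 ≤ n → ∀ f : X ⟶ Y⟦n⟧, f = 0)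
    (n : ℕ) {X Y Z : C} (f : X ⟶ Y) (g : Y ⟶ Z) (h : Z ⟶ X⟦(1 : ℤ)⟧)
    (hT : Triangle.mk f g h ∈ distTriang C)
    (hX : X ∈ V P n) (hZ : Z ∈ V P n) :
    Y ∈ V P n :=
  star_V_subset hPiso hPsum hPconn n (mem_star hT hX hZ)

theorem statement0 [IsTriangulated C] (P : Set C)
    (hPiso : ∀ ⦃X Y : C⦄, (X ≅ Y) → X ∈ P → Y ∈ P)
    (hPsum : ∀ ⦃X Y : C⦄, X ∈ P → Y ∈ P → (X ⊞ Y) ∈ P)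
    (hPzero : ∀ ⦃X : C⦄, IsZero X → X ∈ P)
    (hPconn : ∀ ⦃X Y : C⦄, X ∈ P → Y ∈ P → ∀ n : ℤ, 1 ≤ n → ∀ f : X ⟶ Y⟦n⟧, f = 0)
    (n : ℕ) {X Y Z : C} (f : X ⟶ Y) (g : Y ⟶ Z) (h : Z ⟶ X⟦(1 : ℤ)⟧)
    (hT : Triangle.mk f g h ∈ distTriang C)
    (hX : X ∈ V P n) (hZ : Z ∈ V P n) :
    Y ∈ V P n :=
  statement0_general P hPiso hPsum hPconn n f g h hT hX hZ

end AuslanderIyamaStmt0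
end

section
/- Fix d ≥ 1. Let A be an abelian category with enough projectives such that (i) every object of A has projective dimension at most d + 1, and (ii) every projective object P fits in an exact sequence 0 → P → I⁰ → I¹ → ⋯ → I^d in which each I^k is both projective and injective. Then A has enough injectives, and moreover every injective object J of A fits in an exact sequence 0 → Y → Q_d → Q_{d-1} → ⋯ → Q_0 → J → 0 in which each Q_k is both projective and injective (i.e. A also has codominant dimension at least d + 1). -/
/-!
Write `Ext¹(C, K) = 0` for "every extension of `C` by `K` splits". Shifting dimensions along a
projective resolution of `C` and an injective coresolution of `K` shows that, since every object
has projective dimension at most `d + 1`, any `(d + 1)`-st cosyzygy through injectives is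
injective. So the last cosyzygy in the projective-injective coresolution of a projective `P` is
injective, `P` has injective coresolutions of every length, and the horseshoe lemma with
induction on the projective dimension extends this to every object.

For an injective `J`, call `K` `i`-good if `Ext¹(C, K) = 0` whenever `C` has an `i`-step
projective-injective coresolution; `J` is `0`-good. If `K` is `i`-good with `i ≤ d`, an
epimorphism `P ↠ K` from a projective extends along `P ↪ I⁰` to an epimorphism `I⁰ ↠ K`, and
its kernel is `(i + 1)`-good, because `Hom(C, I⁰) → Hom(C, K)` is onto for such `C`.
-/

open CategoryTheory Limits

universe v u

namespace AuslanderIyamaStmt10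

variable {A : Type u} [Category.{v} A] [Abelian A]

/-- `ProjDimLE X n`: `X` admits a projective resolution of length at most `n`,
expressed via syzygy short exact sequences. -/
def ProjDimLE : A → ℕ → Prop
  | X, 0 => Projective X
  | X, n + 1 => ∃ (P K : A) (f : K ⟶ P) (g : P ⟶ X) (w : f ≫ g = 0),
      Projective P ∧ (ShortComplex.mk f g w).ShortExact ∧ ProjDimLE K n

/-- `CoresProjInj X n`: there are short exact sequences `X ↪ I⁰ ↠ Y¹`, `Y¹ ↪ I¹ ↠ Y²`,
…, with `n` projective-injective middle terms, i.e. `X` fits in an exact sequence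
`0 → X → I⁰ → ⋯ → I^{n-1}` with all `I^k` projective-injective. -/
def CoresProjInj : A → ℕ → Prop
  | _, 0 => True
  | X, n + 1 => ∃ (I Y : A) (f : X ⟶ I) (g : I ⟶ Y) (w : f ≫ g = 0),
      Projective I ∧ Injective I ∧ (ShortComplex.mk f g w).ShortExact ∧ CoresProjInj Y n

/-- `ResProjInj X n` (dual to `CoresProjInj`): there are short exact sequences
`K₁ ↪ Q₀ ↠ X`, `K₂ ↪ Q₁ ↠ K₁`, …, with `n` projective-injective middle terms, i.e. `X`
fits in an exact sequence `0 → Y → Q_{n-1} → ⋯ → Q_0 → X → 0` with all `Q_k`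
projective-injective. -/
def ResProjInj : A → ℕ → Prop
  | _, 0 => True
  | X, n + 1 => ∃ (Q K : A) (f : K ⟶ Q) (g : Q ⟶ X) (w : f ≫ g = 0),
      Projective Q ∧ Injective Q ∧ (ShortComplex.mk f g w).ShortExact ∧ ResProjInj K n

variable {X Y Z W Q : A}

lemma shortExact_cokernel (f : X ⟶ Y) [Mono f] :
    (ShortComplex.mk f (cokernel.π f) (cokernel.condition f)).ShortExact :=
  ⟨ShortComplex.exact_cokernel f⟩

lemma shortExact_kernel (g : X ⟶ Y) [Epi g] :
    (ShortComplex.mk (kernel.ι g) g (kernel.condition g)).ShortExact :=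
  ⟨ShortComplex.exact_kernel g⟩

lemma shortExact_of_isPushout {f : X ⟶ Y} {g : Y ⟶ W} {w : f ≫ g = 0}
    (hS : (ShortComplex.mk f g w).ShortExact) {h : X ⟶ Z} {inl : Y ⟶ Q} {inr : Z ⟶ Q}
    (sq : IsPushout f h inl inr) :
    (ShortComplex.mk inr (sq.desc g 0 (by rw [w, comp_zero])) (sq.inr_desc _ _ _)).ShortExact := by
  have := hS.mono_f
  have := hS.epi_g
  have : Mono inr := Abelian.mono_inr_of_isColimit f h sq.isColimit
  have : Epi (sq.desc g 0 (by rw [w, comp_zero])) := epi_of_epi_fac (sq.inl_desc _ _ _)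
  refine .mk' (ShortComplex.exact_of_g_is_cokernel _ ?_) inferInstance inferInstance
  refine CokernelCofork.IsColimit.ofπ' _ _ fun {T} k hk => ?_
  obtain ⟨l, hl⟩ := CokernelCofork.IsColimit.desc' hS.gIsCokernel (inl ≫ k)
    (by rw [← Category.assoc, sq.w, Category.assoc, hk, comp_zero])
  exact ⟨l, sq.hom_ext (by simpa using hl) (by simpa using hk.symm)⟩

lemma shortExact_of_isPullback {f : X ⟶ Y} {g : Y ⟶ W} {w : f ≫ g = 0}
    (hS : (ShortComplex.mk f g w).ShortExact) {u : Z ⟶ W} {fst : Q ⟶ Y} {snd : Q ⟶ Z}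
    (sq : IsPullback fst snd g u) :
    (ShortComplex.mk (sq.lift f 0 (by rw [w, zero_comp])) snd (sq.lift_snd _ _ _)).ShortExact := by
  have := hS.mono_f
  have := hS.epi_g
  have : Epi snd := Abelian.epi_snd_of_isLimit g u sq.isLimit
  have : Mono (sq.lift f 0 (by rw [w, zero_comp])) := mono_of_mono_fac (sq.lift_fst _ _ _)
  refine .mk' (ShortComplex.exact_of_f_is_kernel _ ?_) inferInstance inferInstance
  refine KernelFork.IsLimit.ofι' _ _ fun {T} k hk => ?_
  obtain ⟨l, hl⟩ := KernelFork.IsLimit.lift' hS.fIsKernel (k ≫ fst)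
    (by rw [Category.assoc, sq.w, ← Category.assoc, hk, zero_comp])
  exact ⟨l, sq.hom_ext (by simpa using hl) (by simpa using hk.symm)⟩

/-- Yoneda `Ext¹(C, K) = 0`. -/
def ExtOneVanishes (C K : A) : Prop :=
  ∀ ⦃B : A⦄ (f : K ⟶ B) (g : B ⟶ C) (w : f ≫ g = 0),
    (ShortComplex.mk f g w).ShortExact → Nonempty (ShortComplex.mk f g w).Splitting

namespace ExtOneVanishes

variable {C K : A}

lemma of_injective (C : A) [Injective K] : ExtOneVanishes C K :=
  fun _ _ _ _ hS => ⟨hS.splittingOfInjective⟩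

lemma of_projective (K : A) [Projective C] : ExtOneVanishes C K :=
  fun _ _ _ _ hS => ⟨hS.splittingOfProjective⟩

lemma extend {c : X ⟶ Y} {e : Y ⟶ C} {w : c ≫ e = 0} (hS : (ShortComplex.mk c e w).ShortExact)
    (h : ExtOneVanishes C K) (γ : X ⟶ K) : ∃ γ' : Y ⟶ K, c ≫ γ' = γ := by
  have sq := IsPushout.of_hasPushout c γ
  obtain ⟨σ⟩ := h _ _ _ (shortExact_of_isPushout hS sq)
  exact ⟨pushout.inl c γ ≫ σ.r, by rw [← Category.assoc, sq.w, Category.assoc, σ.f_r,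
    Category.comp_id]⟩

lemma lift {ι : K ⟶ Y} {π : Y ⟶ Z} {w : ι ≫ π = 0} (hS : (ShortComplex.mk ι π w).ShortExact)
    (h : ExtOneVanishes C K) (u : C ⟶ Z) : ∃ u' : C ⟶ Y, u' ≫ π = u := by
  have sq := IsPullback.of_hasPullback π u
  obtain ⟨σ⟩ := h _ _ _ (shortExact_of_isPullback hS sq)
  exact ⟨σ.s ≫ pullback.fst π u, by rw [Category.assoc, sq.w, ← Category.assoc, σ.s_g,
    Category.id_comp]⟩

lemma injective_of_forall (h : ∀ C : A, ExtOneVanishes C K) : Injective K where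
  factors g f _ := (h _).extend (shortExact_cokernel f) g

lemma of_forall_extend {α : X ⟶ Y} {β : Y ⟶ C} {w : α ≫ β = 0}
    (hS : (ShortComplex.mk α β w).ShortExact) [Projective Y]
    (hext : ∀ u : X ⟶ K, ∃ u' : Y ⟶ K, α ≫ u' = u) : ExtOneVanishes C K := by
  intro B f g wfg hB
  have := hB.mono_f
  have := hB.epi_g
  have := hS.epi_g
  obtain ⟨h, hh⟩ : ∃ h : Y ⟶ B, h ≫ g = β := ⟨Projective.factorThru β g, by simp⟩
  obtain ⟨u, hu⟩ : ∃ u, u ≫ f = α ≫ h := hB.exact.lift' _ (by simp [hh, w])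
  obtain ⟨u', rfl⟩ := hext u
  obtain ⟨s, hs⟩ : ∃ s, β ≫ s = h - u' ≫ f := hS.exact.desc' _ (by simp [← hu])
  refine ⟨.ofExactOfSection _ hB.exact s ((cancel_epi β).1 ?_) hB.mono_f⟩
  simp [reassoc_of% hs, hh, wfg]

lemma of_forall_lift {k : X ⟶ Y} {q : Y ⟶ K} {w : k ≫ q = 0}
    (hS : (ShortComplex.mk k q w).ShortExact) [Injective Y]
    (hlift : ∀ γ : C ⟶ K, ∃ γ' : C ⟶ Y, γ' ≫ q = γ) : ExtOneVanishes C X := by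
  intro B f g wfg hB
  have := hB.mono_f
  have := hB.epi_g
  have := hS.mono_f
  obtain ⟨h, hh⟩ : ∃ h : B ⟶ Y, f ≫ h = k := ⟨Injective.factorThru k f, by simp⟩
  obtain ⟨γ, hγ⟩ : ∃ γ, g ≫ γ = h ≫ q := hB.exact.desc' _ (by simp [reassoc_of% hh, w])
  obtain ⟨γ', rfl⟩ := hlift γ
  obtain ⟨r, hr⟩ : ∃ r, r ≫ k = h - g ≫ γ' := hS.exact.lift' _ (by simp [hγ])
  refine ⟨.ofExactOfRetraction _ hB.exact r ((cancel_mono k).1 ?_) hB.epi_g⟩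
  simp [hr, hh, reassoc_of% wfg]

lemma of_syzygy {I Y' X' P : A} {ι : K ⟶ I} {π : I ⟶ Y'} {w : ι ≫ π = 0}
    (hK : (ShortComplex.mk ι π w).ShortExact) [Injective I]
    {α : X' ⟶ P} {β : P ⟶ C} {w' : α ≫ β = 0}
    (hC : (ShortComplex.mk α β w').ShortExact) [Projective P]
    (h : ExtOneVanishes X' K) : ExtOneVanishes C Y' := by
  have := hC.mono_f
  refine of_forall_extend hC fun u => ?_
  obtain ⟨v, hv⟩ := h.lift hK u
  exact ⟨Injective.factorThru v α ≫ π, by simp [hv]⟩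

lemma of_cosyzygy {Q K' I C' : A} {k : K' ⟶ Q} {q : Q ⟶ K} {w : k ≫ q = 0}
    (hK : (ShortComplex.mk k q w).ShortExact) [Injective Q]
    {c : C ⟶ I} {e : I ⟶ C'} {w' : c ≫ e = 0}
    (hC : (ShortComplex.mk c e w').ShortExact) [Projective I]
    (h : ExtOneVanishes C' K) : ExtOneVanishes C K' := by
  have := hK.epi_g
  refine of_forall_lift hK fun γ => ?_
  obtain ⟨γ', hγ'⟩ := h.extend hC γ
  exact ⟨c ≫ Projective.factorThru γ' q, by simp [hγ']⟩

end ExtOneVanishes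

lemma coresProjInj_of_le : ∀ {m n : ℕ} {X : A}, m ≤ n → CoresProjInj X n → CoresProjInj X m
  | 0, _, _, _, _ => trivial
  | _ + 1, _ + 1, _, hmn, ⟨I, Y, f, g, w, hIp, hIi, hS, hY⟩ =>
      ⟨I, Y, f, g, w, hIp, hIi, hS, coresProjInj_of_le (by omega) hY⟩

lemma resProjInj_of_forall_extOneVanishes [EnoughProjectives A] {m : ℕ}
    (hdom : ∀ P : A, Projective P → CoresProjInj P m) :
    ∀ (n i : ℕ) (K : A), n + i ≤ m →
      (∀ C : A, CoresProjInj C i → ExtOneVanishes C K) → ResProjInj K n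
  | 0, _, _, _, _ => trivial
  | n + 1, i, K, hni, hK => by
    obtain ⟨I, C', c, e, _, hIp, hIi, hS, hC'⟩ : CoresProjInj (Projective.over K) (i + 1) :=
      coresProjInj_of_le (by omega) (hdom _ inferInstance)
    obtain ⟨r, hr⟩ := (hK C' hC').extend hS (Projective.π K)
    have : Epi r := epi_of_epi_fac hr
    refine ⟨I, kernel r, kernel.ι r, r, kernel.condition r, hIp, hIi, shortExact_kernel r,
      resProjInj_of_forall_extOneVanishes hdom n (i + 1) _ (by omega) ?_⟩
    rintro C ⟨I', C'', c', e', _, hI', -, hS', hC''⟩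
    exact (hK C'' hC'').of_cosyzygy (shortExact_kernel r) hS'

lemma resProjInj_of_injective [EnoughProjectives A] {m : ℕ}
    (hdom : ∀ P : A, Projective P → CoresProjInj P m) (J : A) [Injective J] :
    ResProjInj J m :=
  resProjInj_of_forall_extOneVanishes hdom m 0 J le_rfl fun C _ => .of_injective C

def CosyzInj : A → ℕ → Prop
  | _, 0 => True
  | Y, n + 1 => ∃ (Y₀ I : A) (ι : Y₀ ⟶ I) (π : I ⟶ Y) (w : ι ≫ π = 0),
      Injective I ∧ (ShortComplex.mk ι π w).ShortExact ∧ CosyzInj Y₀ n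

lemma extOneVanishes_of_projDimLE_of_cosyzInj :
    ∀ {n : ℕ} {X Y : A}, ProjDimLE X n → CosyzInj Y n → ExtOneVanishes X Y
  | 0, X, _, hX, _ => have : Projective X := hX; .of_projective _
  | _ + 1, _, _, ⟨_, _, _, _, _, hP, hX, hK⟩, ⟨_, _, _, _, _, hI, hY, hY₀⟩ =>
      have := hP
      have := hI
      (extOneVanishes_of_projDimLE_of_cosyzInj hK hY₀).of_syzygy hY hX

lemma injective_of_cosyzInj {n : ℕ} (hgl : ∀ X : A, ProjDimLE X n) {Y : A}
    (hY : CosyzInj Y n) : Injective Y :=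
  ExtOneVanishes.injective_of_forall fun C => extOneVanishes_of_projDimLE_of_cosyzInj (hgl C) hY

def CoresInj : A → ℕ → Prop
  | _, 0 => True
  | X, n + 1 => ∃ (E Y : A) (f : X ⟶ E) (g : E ⟶ Y) (w : f ≫ g = 0),
      Injective E ∧ (ShortComplex.mk f g w).ShortExact ∧ CoresInj Y n

lemma coresInj_of_injective : ∀ (n : ℕ) (X : A) [Injective X], CoresInj X n
  | 0, _, _ => trivial
  | n + 1, X, _ =>
      have : Injective (cokernel (𝟙 X)) := (isZero_cokernel_of_epi _).injective
      ⟨X, _, 𝟙 X, _, _, inferInstance, shortExact_cokernel _, coresInj_of_injective n _⟩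

lemma coresInj_of_coresProjInj {m : ℕ} (hgl : ∀ X : A, ProjDimLE X m) :
    ∀ (k j : ℕ) {Y : A}, j + k = m → CosyzInj Y j → CoresProjInj Y k → ∀ n, CoresInj Y n
  | 0, j, Y, hjk, hY, _, n =>
      have : Injective Y := injective_of_cosyzInj hgl (by simpa [← hjk] using hY)
      coresInj_of_injective n Y
  | _ + 1, _, _, _, _, _, 0 => trivial
  | k + 1, j, Y, hjk, hY, ⟨I, Y', f, g, w, _, hI, hS, hY'⟩, n + 1 =>
      ⟨I, Y', f, g, w, hI, hS,
        coresInj_of_coresProjInj hgl k (j + 1) (by omega) ⟨Y, I, f, g, w, hI, hS, hY⟩ hY' n⟩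

/-- `pushout g σ` is `F / E`, a retract of `F` since the injective subobject `E` splits off. -/
lemma injective_pushout_of_shortExact {E G X F : A} {ι : E ⟶ G} {σ : G ⟶ X} {w : ι ≫ σ = 0}
    (hS : (ShortComplex.mk ι σ w).ShortExact) [Injective E] (g : G ⟶ F) [Mono g]
    [Injective F] : Injective (pushout g σ) := by
  have := hS.mono_f
  have := hS.epi_g
  set ρ := Injective.factorThru (𝟙 E) (ι ≫ g)
  set e := 𝟙 F - ρ ≫ ι ≫ g
  have he : e ≫ pushout.inl g σ = pushout.inl g σ := by
    simp [e, pushout.condition, reassoc_of% w]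
  obtain ⟨t, ht⟩ : ∃ t, σ ≫ t = g ≫ e := hS.exact.desc' _ (by
    simp [e, ρ, Preadditive.comp_sub, ← Category.assoc ι g])
  have : Retract (pushout g σ) F :=
    { i := pushout.desc e t ht.symm
      r := pushout.inl g σ
      retract := pushout.hom_ext (by rw [pushout.inl_desc_assoc, he, Category.comp_id]) (by
        rw [pushout.inr_desc_assoc, Category.comp_id, ← cancel_epi σ, reassoc_of% ht, he,
          pushout.condition]) }
  exact this.injective

/-- The `3 × 3` lemma. -/
lemma shortExact_of_shortExact_columns {S T : ShortComplex A} (φ : S ⟶ T)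
    (hS : S.ShortExact) (hT : T.ShortExact) {Y₁ Y₂ Y₃ : A}
    {c₁ : T.X₁ ⟶ Y₁} {c₂ : T.X₂ ⟶ Y₂} {c₃ : T.X₃ ⟶ Y₃}
    {w₁ : φ.τ₁ ≫ c₁ = 0} {w₂ : φ.τ₂ ≫ c₂ = 0} {w₃ : φ.τ₃ ≫ c₃ = 0}
    (h₁ : (ShortComplex.mk _ _ w₁).ShortExact) (h₂ : (ShortComplex.mk _ _ w₂).ShortExact)
    (h₃ : (ShortComplex.mk _ _ w₃).ShortExact) {f : Y₁ ⟶ Y₂} {g : Y₂ ⟶ Y₃} (w : f ≫ g = 0)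
    (hf : c₁ ≫ f = T.f ≫ c₂) (hg : c₂ ≫ g = T.g ≫ c₃) :
    (ShortComplex.mk f g w).ShortExact := by
  have := hS.mono_f
  have := hS.epi_g
  have := hT.mono_f
  have := hT.epi_g
  have := h₁.epi_g
  have := h₂.epi_g
  have := h₃.mono_f
  have := h₃.epi_g
  have : Epi g := epi_of_epi_fac hg
  have hmono : Mono f := by
    rw [Preadditive.mono_iff_cancel_zero]
    intro Z z hz
    obtain ⟨Z₁, π₁, _, e, he⟩ := surjective_up_to_refinements_of_epi c₁ z
    obtain ⟨Z₂, π₂, _, x, hx⟩ := h₂.exact.exact_up_to_refinements (e ≫ T.f)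
      (by simp [← hf, ← reassoc_of% he, hz])
    obtain ⟨y, hy⟩ : ∃ y, y ≫ S.f = x := hS.exact.lift' x <| (cancel_mono φ.τ₃).1 <| by
      simp [← φ.comm₂₃, ← reassoc_of% hx]
    have hey : π₂ ≫ e = y ≫ φ.τ₁ := (cancel_mono T.f).1 <| by simp [hx, ← hy, φ.comm₁₂]
    rw [← cancel_epi π₁, ← cancel_epi π₂, he, reassoc_of% hey, w₁]
    simp
  refine .mk' ?_ hmono inferInstance
  rw [ShortComplex.exact_iff_exact_up_to_refinements]
  intro Z x hx
  obtain ⟨Z₁, π₁, _, e, he⟩ := surjective_up_to_refinements_of_epi c₂ x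
  obtain ⟨Z₂, π₂, _, y, hy⟩ := h₃.exact.exact_up_to_refinements (e ≫ T.g)
    (by simp [← hg, ← reassoc_of% he, hx])
  obtain ⟨Z₃, π₃, _, x₂, hx₂⟩ := surjective_up_to_refinements_of_epi S.g y
  obtain ⟨t, ht⟩ : ∃ t, t ≫ T.f = π₃ ≫ π₂ ≫ e - x₂ ≫ φ.τ₂ := hT.exact.lift' _ <| by
    simp [hy, reassoc_of% hx₂, φ.comm₂₃]
  refine ⟨Z₃, π₃ ≫ π₂ ≫ π₁, inferInstance, t ≫ c₁, ?_⟩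
  simp [hf, reassoc_of% ht, he, w₂]

lemma exists_shortExact_horseshoe {X₁ X₂ X₃ E₁ E₃ Y₁ Y₃ : A} {i : X₁ ⟶ X₂} {p : X₂ ⟶ X₃}
    {w : i ≫ p = 0} (hS : (ShortComplex.mk i p w).ShortExact)
    {a : X₁ ⟶ E₁} {a' : E₁ ⟶ Y₁} {wa : a ≫ a' = 0} (ha : (ShortComplex.mk a a' wa).ShortExact)
    {c : X₃ ⟶ E₃} {c' : E₃ ⟶ Y₃} {wc : c ≫ c' = 0} (hc : (ShortComplex.mk c c' wc).ShortExact)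
    [Injective E₁] :
    ∃ (W : A) (φ : X₂ ⟶ E₁ ⊞ E₃) (ψ : E₁ ⊞ E₃ ⟶ W) (wφ : φ ≫ ψ = 0) (f : Y₁ ⟶ W)
      (g : W ⟶ Y₃) (wfg : f ≫ g = 0),
      (ShortComplex.mk φ ψ wφ).ShortExact ∧ (ShortComplex.mk f g wfg).ShortExact := by
  have := hS.mono_f
  have := ha.mono_f
  have := ha.epi_g
  have := hc.mono_f
  let T := ShortComplex.mk (biprod.inl : E₁ ⟶ E₁ ⊞ E₃) biprod.snd biprod.inl_snd
  have hT : T.ShortExact :=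
    (ShortComplex.Splitting.mk biprod.fst biprod.inr (by simp [T]) (by simp [T])
      (by simp [T, biprod.total])).shortExact
  let φ : ShortComplex.mk i p w ⟶ T :=
    { τ₁ := a
      τ₂ := biprod.lift (Injective.factorThru a i) (p ≫ c)
      τ₃ := c
      comm₁₂ := by ext <;> simp [T, reassoc_of% w]
      comm₂₃ := by simp [T] }
  have : Mono φ.τ₂ := ShortComplex.mono_τ₂_of_exact_of_mono φ hS.exact
  have h₁₂ : a ≫ T.f = i ≫ φ.τ₂ := φ.comm₁₂
  have h₂₃ : φ.τ₂ ≫ T.g = p ≫ c := φ.comm₂₃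
  obtain ⟨f, hf⟩ : ∃ f, a' ≫ f = T.f ≫ cokernel.π φ.τ₂ := ha.exact.desc' _ <| by
    simp [reassoc_of% h₁₂]
  obtain ⟨g, hg⟩ : ∃ g, cokernel.π φ.τ₂ ≫ g = T.g ≫ c' :=
    ⟨cokernel.desc _ _ (by simp [reassoc_of% h₂₃, wc]), cokernel.π_desc _ _ _⟩
  have wfg : f ≫ g = 0 := by
    rw [← cancel_epi a', reassoc_of% hf, hg]
    simp [T]
  exact ⟨_, φ.τ₂, _, _, f, g, wfg, shortExact_cokernel _,
    shortExact_of_shortExact_columns φ hS hT ha (shortExact_cokernel _) hc wfg hf hg⟩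

lemma coresInj_middle_of_shortExact : ∀ (n : ℕ) {X₁ X₂ X₃ : A} {i : X₁ ⟶ X₂} {p : X₂ ⟶ X₃}
    {w : i ≫ p = 0}, (ShortComplex.mk i p w).ShortExact →
      CoresInj X₁ n → CoresInj X₃ n → CoresInj X₂ n
  | 0, _, _, _, _, _, _, _, _, _ => trivial
  | n + 1, _, _, _, _, _, _, hS, ⟨E₁, _, _, _, _, hE₁, ha, hY₁⟩, ⟨E₃, _, _, _, _, hE₃, hc, hY₃⟩ =>
      have := hE₁
      have := hE₃
      have ⟨W, φ, ψ, wφ, _, _, _, hφ, hW⟩ := exists_shortExact_horseshoe hS ha hc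
      ⟨E₁ ⊞ E₃, W, φ, ψ, wφ, inferInstance, hφ, coresInj_middle_of_shortExact n hW hY₁ hY₃⟩

lemma coresInj_right_of_shortExact_of_injective {n : ℕ} {E G X : A} {ι : E ⟶ G} {σ : G ⟶ X}
    {w : ι ≫ σ = 0} (hS : (ShortComplex.mk ι σ w).ShortExact) [Injective E]
    (hG : CoresInj G n) : CoresInj X n := by
  cases n with
  | zero => trivial
  | succ n =>
    obtain ⟨F, G', g, p, _, hF, hG, hG'⟩ := hG
    have := hG.mono_f
    exact ⟨_, G', pushout.inr g σ, _, _, injective_pushout_of_shortExact hS g,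
      shortExact_of_isPushout hG (.of_hasPushout g σ), hG'⟩

/-- With `G` the pushout of `E ← K → P`, one has `0 → P → G → K' → 0` and
`0 → E → G → X → 0`. -/
lemma coresInj_right_of_shortExact {n : ℕ} {K P X : A} {α : K ⟶ P} {β : P ⟶ X}
    {w : α ≫ β = 0} (hS : (ShortComplex.mk α β w).ShortExact)
    (hK : CoresInj K (n + 1)) (hP : CoresInj P n) : CoresInj X n := by
  obtain ⟨E, K', a, a', _, hE, ha, hK'⟩ := hK
  have sq := IsPushout.of_hasPushout a α
  exact coresInj_right_of_shortExact_of_injective (shortExact_of_isPushout hS sq.flip)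
    (coresInj_middle_of_shortExact n (shortExact_of_isPushout ha sq) hP hK')

lemma coresInj_of_projDimLE (hproj : ∀ P : A, Projective P → ∀ n, CoresInj P n) :
    ∀ {m : ℕ} {X : A}, ProjDimLE X m → ∀ n, CoresInj X n
  | 0, X, hX => hproj X hX
  | _ + 1, _, ⟨P, _, _, _, _, hP, hS, hK⟩ => fun n =>
      coresInj_right_of_shortExact hS (coresInj_of_projDimLE hproj hK (n + 1)) (hproj P hP n)

theorem statement10_general (d : ℕ) [EnoughProjectives A]
    (hgl : ∀ X : A, ProjDimLE X (d + 1))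
    (hdom : ∀ P : A, Projective P → CoresProjInj P (d + 1)) :
    EnoughInjectives A ∧ ∀ J : A, Injective J → ResProjInj J (d + 1) := by
  have hproj (P : A) (hP : Projective P) (n : ℕ) : CoresInj P n :=
    coresInj_of_coresProjInj hgl (d + 1) 0 (zero_add _) trivial (hdom P hP) n
  refine ⟨⟨fun X => ?_⟩, fun J _ => resProjInj_of_injective hdom J⟩
  obtain ⟨E, _, f, _, _, hE, hf, -⟩ := coresInj_of_projDimLE hproj (hgl X) 1
  exact ⟨⟨E, hE, f, hf.mono_f⟩⟩

theorem statement10 (d : ℕ) (hd : 1 ≤ d) [EnoughProjectives A]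
    (hgl : ∀ X : A, ProjDimLE X (d + 1))
    (hdom : ∀ P : A, Projective P → CoresProjInj P (d + 1)) :
    EnoughInjectives A ∧ ∀ J : A, Injective J → ResProjInj J (d + 1) :=
  statement10_general d hgl hdom

end AuslanderIyamaStmt10
end

section
/- Let Γ be a ring and I a Γ-module which is injective and such that there is an exact sequence of Γ-modules 0 → Γ → I₀ → I₁ with I₀, I₁ ∈ add I. Let Λ = End_Γ(I), so that for every Γ-module X the abelian group Hom_Γ(X, I) is a left Λ-module via post-composition. Then the contravariant functor Hom_Γ(−, I), from the category of finitely generated projective Γ-modules to the category of left Λ-modules, is fully faithful: for all finitely generated projective Γ-modules P and Q, the map Hom_Γ(P, Q) → Hom_Λ(Hom_Γ(Q, I), Hom_Γ(P, I)) sending f to precomposition with f is bijective. -/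
/-!
Statement 15: Let `Γ` be a ring, `I` an injective `Γ`-module with an exact sequence
`0 → Γ → I₀ → I₁` where `I₀, I₁ ∈ add I`, and `Λ = End_Γ(I)`. Then the contravariant
functor `Hom_Γ(-, I)` from finitely generated projective `Γ`-modules to left
`Λ`-modules is fully faithful: for all finitely generated projective `P`, `Q`, the map
`Hom_Γ(P, Q) → Hom_Λ(Hom_Γ(Q, I), Hom_Γ(P, I))`, `f ↦ (g ↦ g ∘ f)`, is bijective.
(A homomorphism of left `Λ`-modules `Hom_Γ(Q, I) → Hom_Γ(P, I)` is an additive map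
commuting with the `Λ`-action `λ • φ = λ ∘ φ`.)
-/

universe u

namespace AuslanderIyamaStmt15

open LinearMap

/-- `X` belongs to `add I`: `X` is a direct summand of a finite direct power of `I`. -/
def inAdd (Γ : Type u) [Ring Γ] (I : Type u) [AddCommGroup I] [Module Γ I]
    (X : Type u) [AddCommGroup X] [Module Γ X] : Prop :=
  ∃ (n : ℕ) (s : X →ₗ[Γ] (Fin n → I)) (r : (Fin n → I) →ₗ[Γ] X),
    r ∘ₗ s = LinearMap.id

/-!
Write `Q` as a retract of `Γᵐ`. Applying the copresentation of `Γ` coordinatewise and recording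
the idempotent `1 - σπ` of `Γᵐ` in an extra component (extended to `I₀ᵐ` by injectivity) gives
an exact sequence `0 → Q → Q₀ → Q₁` with `Q₀ ∈ add I` and `Q₁` embedded in a power of `I`.
On `add I` every `End I`-linear `θ : Hom(X, I) → Hom(P, I)` is precomposition with some map
`P → X`, by a Yoneda argument for `X = I` (`θ g = g ∘ θ id`). For `Q`, pulling `θ` back along
`Q → Q₀` gives `F : P → Q₀`; since every map `Q → I` extends to `Q₀`, `θ` is precomposition
with `F`, and `F` lands in the kernel of `Q₀ → Q₁` because maps to `I` detect zero in `Q₁`, so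
`F` factors through `Q`. Faithfulness holds because maps to `I` also detect zero in `Q ⊆ Q₀`.
-/

universe v

theorem _root_.Module.Injective.of_split {R : Type*} {M N : Type v} [Ring R]
    [AddCommGroup M] [Module R M] [AddCommGroup N] [Module R N] [Module.Injective R N]
    (i : M →ₗ[R] N) (s : N →ₗ[R] M) (H : s ∘ₗ i = LinearMap.id) : Module.Injective R M :=
  ⟨fun _ _ _ _ _ _ f hf g => by
    obtain ⟨h, hh⟩ := Module.Injective.out f hf (i ∘ₗ g)
    exact ⟨s ∘ₗ h, fun x => by rw [comp_apply, hh, comp_apply, ← comp_apply s i, H, id_apply]⟩⟩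

theorem _root_.Function.Exact.linearMap_compLeft {R M N K : Type*} [Ring R]
    [AddCommGroup M] [Module R M] [AddCommGroup N] [Module R N] [AddCommGroup K] [Module R K]
    {f : M →ₗ[R] N} {g : N →ₗ[R] K} (h : Function.Exact f g) (ι : Type*) :
    Function.Exact (f.compLeft ι) (g.compLeft ι) := fun y => by
  refine ⟨fun hy => ?_, ?_⟩
  · choose x hx using fun i => (h (y i)).mp (congrFun hy i)
    exact ⟨x, funext hx⟩
  · rintro ⟨x, rfl⟩
    exact funext fun i => h.apply_apply_eq_zero (x i)

theorem _root_.LinearMap.exists_comp_eq_of_range_le {R P Q Q₀ : Type*} [Ring R]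
    [AddCommGroup P] [Module R P] [AddCommGroup Q] [Module R Q] [AddCommGroup Q₀] [Module R Q₀]
    {ι : Q →ₗ[R] Q₀} (hι : Function.Injective ι) {F : P →ₗ[R] Q₀} (h : range F ≤ range ι) :
    ∃ f : P →ₗ[R] Q, ι ∘ₗ f = F :=
  ⟨(LinearEquiv.ofInjective ι hι).symm ∘ₗ F.codRestrict _ fun p => h ⟨p, rfl⟩,
    LinearMap.ext fun p => by simp⟩

theorem _root_.Function.Exact.exists_exact_comp_prod_of_split {R : Type*} [Ring R]
    {Q' Q₁ : Type*} {Q Q₀ : Type v} [AddCommGroup Q'] [Module R Q'] [AddCommGroup Q] [Module R Q]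
    [AddCommGroup Q₀] [Module R Q₀] [AddCommGroup Q₁] [Module R Q₁] [Module.Injective R Q₀]
    {ι : Q →ₗ[R] Q₀} {δ : Q₀ →ₗ[R] Q₁} (hιδ : Function.Exact ι δ) (hι : Function.Injective ι)
    (i : Q' →ₗ[R] Q) (s : Q →ₗ[R] Q') (H : s ∘ₗ i = LinearMap.id) :
    ∃ E : Q₀ →ₗ[R] Q₀, Function.Exact (ι ∘ₗ i) (δ.prod E) := by
  -- `E` vanishes on `ι (i Q')` and is injective on the complementary summand `ι (ker s)`.
  obtain ⟨E, hE⟩ := Module.Injective.out ι hι (ι ∘ₗ (LinearMap.id - i ∘ₗ s))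
  have hsi : ∀ q, s (i q) = q := LinearMap.congr_fun H
  refine ⟨E, fun x => ⟨fun hx => ?_, ?_⟩⟩
  · obtain ⟨hδx, hEx⟩ := Prod.mk_eq_zero.mp hx
    obtain ⟨y, rfl⟩ := (hιδ x).mp hδx
    have hy : y = i (s y) := by
      have := hE y
      rw [hEx] at this
      exact sub_eq_zero.mp (hι (by simpa using this.symm))
    exact ⟨s y, by rw [comp_apply, ← hy]⟩
  · rintro ⟨q, rfl⟩
    refine Prod.ext (hιδ.apply_apply_eq_zero (i q)) ?_
    simpa [hsi] using hE (i q)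

section

variable {Γ : Type*} [Ring Γ] {I : Type v} [AddCommGroup I] [Module Γ I]

def Cogenerates (Γ I X : Type*) [Ring Γ] [AddCommGroup I] [Module Γ I]
    [AddCommGroup X] [Module Γ X] : Prop :=
  ∀ x : X, (∀ φ : X →ₗ[Γ] I, φ x = 0) → x = 0

theorem cogenerates_self : Cogenerates Γ I I :=
  fun _ h => h LinearMap.id

namespace Cogenerates

variable {X Y : Type*} [AddCommGroup X] [Module Γ X] [AddCommGroup Y] [Module Γ Y]

theorem of_injective (h : Cogenerates Γ I Y) (f : X →ₗ[Γ] Y) (hf : Function.Injective f) :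
    Cogenerates Γ I X :=
  fun x hx => hf <| by rw [map_zero]; exact h _ fun φ => hx (φ ∘ₗ f)

theorem pi {ι : Type*} {X : ι → Type*} [∀ i, AddCommGroup (X i)] [∀ i, Module Γ (X i)]
    (h : ∀ i, Cogenerates Γ I (X i)) : Cogenerates Γ I (∀ i, X i) :=
  fun x hx => funext fun i => h i (x i) fun φ => hx (φ ∘ₗ proj i)

theorem prod (hX : Cogenerates Γ I X) (hY : Cogenerates Γ I Y) : Cogenerates Γ I (X × Y) :=
  fun x hx => Prod.ext (hX x.1 fun φ => hx (φ ∘ₗ fst Γ X Y)) (hY x.2 fun φ => hx (φ ∘ₗ snd Γ X Y))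

theorem linearMap_ext {P : Type*} [AddCommGroup P] [Module Γ P] (h : Cogenerates Γ I X)
    {f f' : P →ₗ[Γ] X} (H : ∀ g : X →ₗ[Γ] I, g ∘ₗ f = g ∘ₗ f') : f = f' :=
  LinearMap.ext fun p => sub_eq_zero.mp <| h _ fun g => by
    rw [map_sub, sub_eq_zero, ← comp_apply, H g, comp_apply]

end Cogenerates

/-- `Hom_Γ(-, I)` is full on `Hom_Γ(P, X)`. -/
def HomFull (Γ I P X : Type*) [Ring Γ] [AddCommGroup I] [Module Γ I]
    [AddCommGroup P] [Module Γ P] [AddCommGroup X] [Module Γ X] : Prop :=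
  ∀ θ : (X →ₗ[Γ] I) →+ (P →ₗ[Γ] I), (∀ (lam : Module.End Γ I) g, θ (lam ∘ₗ g) = lam ∘ₗ θ g) →
    ∃ f : P →ₗ[Γ] X, ∀ g, θ g = g ∘ₗ f

variable {P : Type*} [AddCommGroup P] [Module Γ P]

theorem homFull_self : HomFull Γ I P I :=
  fun θ hθ => ⟨θ LinearMap.id, fun g => by simpa using hθ g LinearMap.id⟩

namespace HomFull

variable {X Y : Type*} [AddCommGroup X] [Module Γ X] [AddCommGroup Y] [Module Γ Y]

theorem of_split (h : HomFull Γ I P X) (i : Y →ₗ[Γ] X) (s : X →ₗ[Γ] Y)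
    (H : s ∘ₗ i = LinearMap.id) : HomFull Γ I P Y := by
  intro θ hθ
  obtain ⟨F, hF⟩ := h (θ.comp (lcomp ℕ I i).toAddMonoidHom) fun lam g => hθ lam (g ∘ₗ i)
  refine ⟨s ∘ₗ F, fun g => ?_⟩
  calc θ g = θ ((g ∘ₗ s) ∘ₗ i) := by rw [comp_assoc, H, comp_id]
    _ = g ∘ₗ s ∘ₗ F := hF (g ∘ₗ s)

theorem pi {ι : Type*} [Fintype ι] {X : ι → Type*} [∀ i, AddCommGroup (X i)]
    [∀ i, Module Γ (X i)] (h : ∀ i, HomFull Γ I P (X i)) : HomFull Γ I P (∀ i, X i) := by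
  classical
  intro θ hθ
  choose F hF using fun i =>
    h i (θ.comp (lcomp ℕ I (proj i)).toAddMonoidHom) fun lam g => hθ lam (g ∘ₗ proj i)
  refine ⟨LinearMap.pi F, fun g => ?_⟩
  have hg : g = ∑ i, (g ∘ₗ single Γ X i) ∘ₗ proj i := by
    ext x; simp [← map_sum, Finset.univ_sum_single]
  calc θ g = ∑ i, θ ((g ∘ₗ single Γ X i) ∘ₗ proj i) := by rw [← map_sum, ← hg]
    _ = ∑ i, (g ∘ₗ single Γ X i) ∘ₗ F i := Finset.sum_congr rfl fun i _ => hF i (g ∘ₗ single Γ X i)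
    _ = g ∘ₗ LinearMap.pi F := by
      conv_rhs => rw [hg]
      ext p; simp

theorem of_exact (hI : Module.Injective Γ I) {Q Q₀ : Type v} {Q₁ : Type*}
    [AddCommGroup Q] [Module Γ Q] [AddCommGroup Q₀] [Module Γ Q₀] [AddCommGroup Q₁] [Module Γ Q₁]
    {ι : Q →ₗ[Γ] Q₀} {δ : Q₀ →ₗ[Γ] Q₁} (hι : Function.Injective ι) (hιδ : Function.Exact ι δ)
    (h₀ : HomFull Γ I P Q₀) (h₁ : Cogenerates Γ I Q₁) : HomFull Γ I P Q := by
  intro θ hθ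
  obtain ⟨F, hF⟩ := h₀ (θ.comp (lcomp ℕ I ι).toAddMonoidHom) fun lam g => hθ lam (g ∘ₗ ι)
  have hδF : ∀ p, δ (F p) = 0 := fun p => h₁ _ fun φ => by
    have hφ : θ ((φ ∘ₗ δ) ∘ₗ ι) = 0 := by
      rw [comp_assoc, hιδ.linearMap_comp_eq_zero, comp_zero, map_zero]
    simpa [lcomp_apply', hφ] using (LinearMap.congr_fun (hF (φ ∘ₗ δ)) p).symm
  obtain ⟨f, rfl⟩ := exists_comp_eq_of_range_le hι <| by
    rintro _ ⟨p, rfl⟩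
    exact (hιδ _).mp (hδF p)
  refine ⟨f, fun g => ?_⟩
  obtain ⟨g₀, hg₀⟩ := hI.out ι hι g
  obtain rfl : g₀ ∘ₗ ι = g := LinearMap.ext hg₀
  exact hF g₀

end HomFull

end

section

variable {Γ : Type u} [Ring Γ] {I : Type u} [AddCommGroup I] [Module Γ I]
  {X : Type u} [AddCommGroup X] [Module Γ X]

theorem inAdd.injective (hI : Module.Injective Γ I) (h : inAdd Γ I X) : Module.Injective Γ X := by
  obtain ⟨n, s, r, hrs⟩ := h
  exact Module.Injective.of_split s r hrs

theorem inAdd.cogenerates (h : inAdd Γ I X) : Cogenerates Γ I X := by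
  obtain ⟨n, s, r, hrs⟩ := h
  exact (Cogenerates.pi fun _ => cogenerates_self).of_injective s (injective_of_comp_eq_id s r hrs)

theorem inAdd.homFull {P : Type*} [AddCommGroup P] [Module Γ P] (h : inAdd Γ I X) :
    HomFull Γ I P X := by
  obtain ⟨n, s, r, hrs⟩ := h
  exact (HomFull.pi fun _ => homFull_self).of_split s r hrs

end

theorem statement15_general (Γ : Type u) [Ring Γ]
    (I : Type u) [AddCommGroup I] [Module Γ I] (hI : Module.Injective Γ I)
    (I₀ I₁ : Type u) [AddCommGroup I₀] [Module Γ I₀] [AddCommGroup I₁] [Module Γ I₁]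
    (hI₀ : inAdd Γ I I₀) (hI₁ : inAdd Γ I I₁)
    (α : Γ →ₗ[Γ] I₀) (β : I₀ →ₗ[Γ] I₁)
    (hα : Function.Injective α) (hαβ : Function.Exact α β)
    (P Q : Type u) [AddCommGroup P] [Module Γ P] [AddCommGroup Q] [Module Γ Q]
    [Module.Finite Γ Q] [Module.Projective Γ Q] :
    -- injectivity of `f ↦ (g ↦ g ∘ f)`
    (∀ f f' : P →ₗ[Γ] Q, (∀ g : Q →ₗ[Γ] I, g ∘ₗ f = g ∘ₗ f') → f = f') ∧
    -- surjectivity onto the `Λ`-homomorphisms, where `Λ = End_Γ(I)` acts by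
    -- post-composition
    ∀ θ : (Q →ₗ[Γ] I) →+ (P →ₗ[Γ] I),
      (∀ (lam : Module.End Γ I) (g : Q →ₗ[Γ] I), θ (lam ∘ₗ g) = lam ∘ₗ θ g) →
      ∃ f : P →ₗ[Γ] Q, ∀ g : Q →ₗ[Γ] I, θ g = g ∘ₗ f := by
  obtain ⟨m, π, hπ⟩ := Module.Finite.exists_fin' Γ Q
  obtain ⟨σ, hσ⟩ := Module.projective_lifting_property π LinearMap.id hπ
  have : Module.Injective Γ I₀ := hI₀.injective hI
  have hαm : Function.Injective (α.compLeft (Fin m)) := hα.comp_left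
  obtain ⟨E, hE⟩ := (hαβ.linearMap_compLeft (Fin m)).exists_exact_comp_prod_of_split hαm σ π hσ
  have hι : Function.Injective (α.compLeft (Fin m) ∘ₗ σ) :=
    hαm.comp (injective_of_comp_eq_id σ π hσ)
  have hQ : Cogenerates Γ I Q := (Cogenerates.pi fun _ => hI₀.cogenerates).of_injective _ hι
  exact ⟨fun _ _ => hQ.linearMap_ext,
    HomFull.of_exact hI hι hE (HomFull.pi fun _ => hI₀.homFull)
      ((Cogenerates.pi fun _ => hI₁.cogenerates).prod (Cogenerates.pi fun _ => hI₀.cogenerates))⟩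

theorem statement15 (Γ : Type u) [Ring Γ]
    (I : Type u) [AddCommGroup I] [Module Γ I] (hI : Module.Injective Γ I)
    (I₀ I₁ : Type u) [AddCommGroup I₀] [Module Γ I₀] [AddCommGroup I₁] [Module Γ I₁]
    (hI₀ : inAdd Γ I I₀) (hI₁ : inAdd Γ I I₁)
    (α : Γ →ₗ[Γ] I₀) (β : I₀ →ₗ[Γ] I₁)
    (hα : Function.Injective α) (hαβ : Function.Exact α β)
    (P Q : Type u) [AddCommGroup P] [Module Γ P] [AddCommGroup Q] [Module Γ Q]
    [Module.Finite Γ P] [Module.Projective Γ P]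
    [Module.Finite Γ Q] [Module.Projective Γ Q] :
    -- injectivity of `f ↦ (g ↦ g ∘ f)`
    (∀ f f' : P →ₗ[Γ] Q, (∀ g : Q →ₗ[Γ] I, g ∘ₗ f = g ∘ₗ f') → f = f') ∧
    -- surjectivity onto the `Λ`-homomorphisms, where `Λ = End_Γ(I)` acts by
    -- post-composition
    ∀ θ : (Q →ₗ[Γ] I) →+ (P →ₗ[Γ] I),
      (∀ (lam : Module.End Γ I) (g : Q →ₗ[Γ] I), θ (lam ∘ₗ g) = lam ∘ₗ θ g) →
      ∃ f : P →ₗ[Γ] Q, ∀ g : Q →ₗ[Γ] I, θ g = g ∘ₗ f :=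
  statement15_general Γ I hI I₀ I₁ hI₀ hI₁ α β hα hαβ P Q

end AuslanderIyamaStmt15
end
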